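/- arXiv:0807.1690 — 3 statements merged into one kernel-verified Lean document; each statement's English description precedes it below -/
import Mathlib

section
/- Let M_n(t) be the (n-1)×(n-1) tridiagonal matrix with diagonal entries t_i + t_{i+1} (for i = 1,…,n-1) and off-diagonal entries (M_n)_{i,i+1} = (M_n)_{i+1,i} = -t_{i+1}, over the polynomial ring ℤ[t_1,…,t_n]. Then det M_n(t) = Σ_{i=1}^n Π_{j≠i} t_j, the Kirchhoff polynomial of the n-th banana graph. -/
/-!
Expanding along the last row, the determinants `D m` of the `m × m` banana matrices satisfy the
continuant recurrence `D (m + 2) = (t (m + 1) + t (m + 2)) * D (m + 1) - t (m + 1) ^ 2 * D m`.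
Splitting off the summand that omits the last variable gives
`K (n + 1) = t n * K n + t 0 ⋯ t (n - 1)` for the Kirchhoff polynomials, from which `K (m + 1)`
satisfies the same recurrence; the initial values `D 0 = K 1 = 1` and `D 1 = K 2 = t 0 + t 1` agree.
The variables are indexed from `0`, so the paper's `t_{k+1}` is `X k`.
-/

open Finset

namespace Matrix

variable {R : Type*} [CommRing R]

theorem det_succ_succ_of_last_row_col {m : ℕ} (A : Matrix (Fin (m + 2)) (Fin (m + 2)) R)
    (hrow : ∀ j : Fin m, A (Fin.last _) j.castSucc.castSucc = 0)
    (hcol : ∀ i : Fin m, A i.castSucc.castSucc (Fin.last _) = 0) :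
    A.det = A (Fin.last _) (Fin.last _) * (A.submatrix Fin.castSucc Fin.castSucc).det
      - A (Fin.last _) (Fin.last m).castSucc * A (Fin.last m).castSucc (Fin.last _)
        * ((A.submatrix Fin.castSucc Fin.castSucc).submatrix Fin.castSucc Fin.castSucc).det := by
  have hminor : (A.submatrix Fin.castSucc (Fin.last m).castSucc.succAbove).det
      = A (Fin.last m).castSucc (Fin.last _)
        * ((A.submatrix Fin.castSucc Fin.castSucc).submatrix Fin.castSucc Fin.castSucc).det := by
    rw [det_succ_column _ (Fin.last m), Fin.sum_univ_castSucc,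
      sum_eq_zero fun i _ => by simp [hcol]]
    simp [pow_add, ← mul_pow, Function.comp_def]
  rw [det_succ_row _ (Fin.last _), Fin.sum_univ_castSucc, Fin.sum_univ_castSucc,
    sum_eq_zero fun j _ => by simp [hrow], Fin.succAbove_last, hminor]
  simp [pow_add, ← mul_pow]
  ring

end Matrix

section Banana

variable {R : Type*} [CommRing R]

def bananaMatrix (t : ℕ → R) (m : ℕ) : Matrix (Fin m) (Fin m) R :=
  Matrix.of fun i j =>
    if (i : ℕ) = (j : ℕ) then t i + t (i + 1)
    else if (i : ℕ) + 1 = (j : ℕ) ∨ (j : ℕ) + 1 = (i : ℕ) then -t (max (i : ℕ) (j : ℕ))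
    else 0

def kirchhoffBanana (t : ℕ → R) (n : ℕ) : R :=
  ∑ i ∈ range n, ∏ j ∈ (range n).erase i, t j

theorem bananaMatrix_submatrix_castSucc (t : ℕ → R) (m : ℕ) :
    (bananaMatrix t (m + 1)).submatrix Fin.castSucc Fin.castSucc = bananaMatrix t m := by
  ext i j
  simp [bananaMatrix]

theorem det_bananaMatrix_succ_succ (t : ℕ → R) (m : ℕ) :
    (bananaMatrix t (m + 2)).det
      = (t (m + 1) + t (m + 2)) * (bananaMatrix t (m + 1)).det
        - t (m + 1) ^ 2 * (bananaMatrix t m).det := by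
  rw [Matrix.det_succ_succ_of_last_row_col _ (fun j => ?_) (fun i => ?_),
    bananaMatrix_submatrix_castSucc, bananaMatrix_submatrix_castSucc]
  · simp [bananaMatrix, sq]
  all_goals
    simp only [bananaMatrix, Matrix.of_apply, Fin.val_last, Fin.val_castSucc]
    rw [if_neg (by omega), if_neg (by omega)]

theorem kirchhoffBanana_succ (t : ℕ → R) (n : ℕ) :
    kirchhoffBanana t (n + 1) = t n * kirchhoffBanana t n + ∏ j ∈ range n, t j := by
  rw [kirchhoffBanana, sum_range_succ, range_add_one, erase_insert notMem_range_self,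
    kirchhoffBanana, mul_sum]
  congr 1
  refine sum_congr rfl fun i hi => ?_
  rw [erase_insert_of_ne (by grind), prod_insert (by simp)]

theorem kirchhoffBanana_succ_succ_succ (t : ℕ → R) (m : ℕ) :
    kirchhoffBanana t (m + 3)
      = (t (m + 1) + t (m + 2)) * kirchhoffBanana t (m + 2)
        - t (m + 1) ^ 2 * kirchhoffBanana t (m + 1) := by
  rw [kirchhoffBanana_succ t (m + 2), kirchhoffBanana_succ t (m + 1),
    prod_range_succ _ (m + 1)]
  ring

theorem det_bananaMatrix (t : ℕ → R) (m : ℕ) :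
    (bananaMatrix t m).det = kirchhoffBanana t (m + 1) := by
  induction m using Nat.twoStepInduction with
  | zero => simp [kirchhoffBanana]
  | one =>
    rw [kirchhoffBanana_succ]
    simp [bananaMatrix, kirchhoffBanana, add_comm]
  | more m ih₀ ih₁ =>
    rw [det_bananaMatrix_succ_succ, ih₀, ih₁, kirchhoffBanana_succ_succ_succ]

end Banana

/-- The determinant of the (n-1)×(n-1) tridiagonal matrix with diagonal entries
t_i + t_{i+1} and off-diagonal entries -t_{i+1} equals the Kirchhoff polynomial
Σ_{i=1}^n Π_{j≠i} t_j of the n-th banana graph (here t_{k+1} = X k, 0-indexed). -/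
theorem banana_det_eq_kirchhoff (n : ℕ) (hn : 2 ≤ n) :
    Matrix.det (Matrix.of fun i j : Fin (n-1) =>
      if (i : ℕ) = (j : ℕ) then
        MvPolynomial.X (i : ℕ) + MvPolynomial.X ((i : ℕ) + 1)
      else if (i : ℕ) + 1 = (j : ℕ) ∨ (j : ℕ) + 1 = (i : ℕ) then
        -(MvPolynomial.X (max (i : ℕ) (j : ℕ)) : MvPolynomial ℕ ℤ)
      else 0)
    = ∑ i ∈ Finset.range n, ∏ j ∈ (Finset.range n).erase i, MvPolynomial.X j := by
  obtain ⟨m, rfl⟩ : ∃ m, n = m + 1 := ⟨n - 1, by omega⟩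
  exact det_bananaMatrix MvPolynomial.X m
end

section
/- For n ≥ 2 and 0 ≤ k ≤ n-1: the coefficient of T^k in the polynomial (T^n - (-1)^n)/(T+1) + n·T^{n-2} ∈ ℤ[T], when rewritten in the basis {p_r(T) = ((1+T)^{r+1}-1)/T}_{r≥0}, equals (-1)^{n-1-k} C(n+1, k+2) + n·(-1)^{n-2-k} C(n-1, k+1) (where the second term is taken to be 0 for k = n-1). -/
/-!
Write `c_k` for the claimed coefficients and multiply both sides by `X * (X + 1)`. Since
`X * p_k = (1 + X)^(k+1) - 1`, the right side becomes `∑ c_k (X + 1)^(k+2) - (∑ c_k) (X + 1)`,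
while the left side becomes `X^(n+1) - (-1)^n X + n (X + 1) X^(n-1)`. Expanding the latter in
powers of `X + 1` by the binomial theorem for `X = (X + 1) - 1`, the terms of degree `0` and `1`
cancel and `c_k` is exactly the coefficient of `(X + 1)^(k+2)`. Evaluating at `X = 0` then forces
`∑ c_k = 0`.
-/

open Polynomial Finset

/-- The class of ℙ^r in the torus class: p_r(T) = ((1+T)^{r+1} - 1)/T. -/
noncomputable def projClass (r : ℕ) : Polynomial ℤ :=
  ∑ j ∈ Finset.range (r+1), Polynomial.C (((r+1).choose (j+1) : ℤ)) * X^j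

lemma X_mul_projClass (r : ℕ) : (X : ℤ[X]) * projClass r = (1 + X)^(r+1) - 1 := by
  rw [add_comm 1 X, add_pow, sum_range_succ', projClass, mul_sum]
  simp only [pow_zero, one_pow, mul_one, Nat.choose_zero_right, Nat.cast_one, add_sub_cancel_right]
  exact sum_congr rfl fun j _ => by rw [C_eq_natCast]; ring

lemma sub_one_pow_eq_sum_range {R : Type*} [CommRing R] (y : R) {m N : ℕ} (h : m < N) :
    (y - 1)^m = ∑ j ∈ range N, (-1)^(m-j) * (m.choose j : R) * y^j := by
  rw [sub_eq_add_neg, add_pow]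
  refine (sum_subset (range_subset_range.2 h) fun j _ hjm => ?_).trans
    (sum_congr rfl fun j _ => by ring)
  simp [Nat.choose_eq_zero_of_lt (by simpa using hjm : m < j)]

def bananaCoeff (n k : ℕ) : ℤ :=
  (-1)^(n-1-k) * (n+1).choose (k+2) + n * (-1)^(n-2-k) * (n-1).choose (k+1)

lemma mul_pow_sub_neg_one_pow_add_eq_sum {R : Type*} [CommRing R] (x : R) (n : ℕ) :
    x * (x^n - (-1)^n) + n * (x + 1) * x^(n-1)
      = ∑ k ∈ range n, (bananaCoeff n k : R) * (x + 1)^(k+2) := by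
  rcases n with _ | n
  · simp
  have hA := sub_one_pow_eq_sum_range (x + 1) (m := n + 2) (N := 2 + (n + 1)) (by omega)
  have hB := sub_one_pow_eq_sum_range (x + 1) (m := n) (N := 1 + (n + 1)) (by omega)
  rw [sum_range_add] at hA hB
  simp only [add_sub_cancel_right, sum_range_succ (n := 1), sum_range_one, Nat.choose_zero_right,
    Nat.choose_one_right, Nat.sub_zero, Nat.add_succ_sub_one, pow_zero, pow_one, Nat.cast_one,
    mul_one] at hA hB
  have hterm : ∀ k, (bananaCoeff (n + 1) k : R) * (x + 1)^(k+2)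
      = (-1)^(n+2-(2+k)) * ((n+2).choose (2+k) : R) * (x + 1)^(2+k)
        + (n + 1) * (x + 1) * ((-1)^(n-(1+k)) * (n.choose (1+k) : R) * (x + 1)^(1+k)) := by
    intro k
    rw [bananaCoeff, show n + 1 - 1 - k = n + 2 - (2 + k) by omega,
      show n + 1 - 2 - k = n - (1 + k) by omega, Nat.add_sub_cancel, add_comm k 2, add_comm k 1]
    push_cast
    ring
  rw [sum_congr rfl fun k _ => hterm k, sum_add_distrib, ← mul_sum, Nat.add_sub_cancel]
  push_cast at hA ⊢
  linear_combination hA + (n + 1) * (x + 1) * hB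

lemma eq_sum_projClass_of_X_mul_X_add_one_mul {Q : ℤ[X]} {N : ℕ} (a : ℕ → ℤ)
    (hQ : X * (X + 1) * Q = ∑ k ∈ range N, C (a k) * (X + 1)^(k+2)) :
    Q = ∑ k ∈ range N, C (a k) * projClass k := by
  have hsum : X * (X + 1) * ∑ k ∈ range N, C (a k) * projClass k
      = ∑ k ∈ range N, C (a k) * (X + 1)^(k+2) - C (∑ k ∈ range N, a k) * (X + 1) := by
    rw [mul_sum, map_sum, sum_mul, ← sum_sub_distrib]
    refine sum_congr rfl fun k _ => ?_
    rw [show X * (X + 1) * (C (a k) * projClass k) = (X + 1) * C (a k) * (X * projClass k) by ring,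
      X_mul_projClass, add_comm 1 X]
    ring
  have hcancel : X * (Q - ∑ k ∈ range N, C (a k) * projClass k) = C (∑ k ∈ range N, a k) := by
    refine mul_left_cancel₀ (X_add_C_ne_zero 1) ?_
    rw [C_1]
    linear_combination hQ - hsum
  have hzero : ∑ k ∈ range N, a k = 0 := by
    have h0 := congrArg (eval 0) hcancel
    rwa [eval_mul, eval_X, zero_mul, eval_C, eq_comm] at h0
  rw [hzero, C_0, mul_eq_zero, sub_eq_zero] at hcancel
  exact hcancel.resolve_left X_ne_zero

/-- Rewriting (T^n - (-1)^n)/(T+1) + nT^{n-2} in the basis {p_r}: the coefficient of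
p_k equals (-1)^{n-1-k} C(n+1, k+2) + n·(-1)^{n-2-k} C(n-1, k+1) (the second term being
0 for k = n-1). -/
theorem banana_complement_proj_basis (n : ℕ) (hn : 2 ≤ n) (P : Polynomial ℤ)
    (hP : (X + 1) * P = X^n - Polynomial.C ((-1 : ℤ)^n)) :
    (∀ r, X * projClass r = (1 + X)^(r+1) - 1) ∧
    P + (n : Polynomial ℤ) * X^(n-2)
      = ∑ k ∈ Finset.range n,
          Polynomial.C ((-1 : ℤ)^(n-1-k) * ((n+1).choose (k+2) : ℤ)
            + (n : ℤ) * (-1 : ℤ)^(n-2-k) * ((n-1).choose (k+1) : ℤ)) * projClass k := by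
  refine ⟨X_mul_projClass, eq_sum_projClass_of_X_mul_X_add_one_mul (bananaCoeff n) ?_⟩
  have hX : X * X^(n-2) = (X^(n-1) : ℤ[X]) := by rw [← pow_succ']; congr 1; omega
  calc X * (X + 1) * (P + (n : ℤ[X]) * X^(n-2))
      = X * ((X + 1) * P) + (n : ℤ[X]) * (X + 1) * (X * X^(n-2)) := by ring
    _ = X * (X^n - (-1)^n) + (n : ℤ[X]) * (X + 1) * X^(n-1) := by rw [hP, hX]; simp
    _ = ∑ k ∈ range n, C (bananaCoeff n k) * (X + 1)^(k+2) := by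
      simp only [mul_pow_sub_neg_one_pow_add_eq_sum, eq_intCast]
end

section
/- For n ≥ 2 and 2 ≤ k ≤ n-1, the coefficient of H^k in the polynomial (1+H)^n - (1-H)^{n-1} - nH - H^n equals C(n,k) - C(n-1,k) = C(n-1,k-1) if k is even, and C(n,k) + C(n-1,k) if k is odd; the coefficient of H^1 is n - 1. In particular all coefficients of H^k for 1 ≤ k ≤ n-1 are positive. -/
/-!
By the binomial theorem the coefficient of `H^k` in `(1+H)^n - (1-H)^(n-1)` is
`C(n,k) - (-1)^k C(n-1,k)`; the terms `nH` and `H^n` only affect `k = 1` and `k = n`.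
For even `k` Pascal's rule turns the difference into `C(n-1,k-1)`, for odd `k` it is a sum,
and both are positive as soon as `1 ≤ k ≤ n-1`.
-/

open Polynomial

theorem coeff_one_sub_X_pow {R : Type*} [CommRing R] (m k : ℕ) :
    ((1 - X : R[X]) ^ m).coeff k = (-1) ^ k * m.choose k := by
  have h : (1 - X : R[X]) = C (-1) * X + 1 := by rw [C_neg, C_1]; ring
  rw [h, add_pow]
  simp only [one_pow, mul_one, mul_pow, ← C_pow, ← C_eq_natCast, mul_right_comm _ (X ^ _),
    ← C_mul, finsetSum_coeff, coeff_C_mul_X_pow, Finset.sum_ite_eq]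
  split_ifs with hk
  · rfl
  · rw [Nat.choose_eq_zero_of_lt (by simpa [Nat.lt_succ_iff] using hk), Nat.cast_zero, mul_zero]

theorem natCast_choose_sub_choose_pred {R : Type*} [AddGroupWithOne R] {n k : ℕ} (hn : 0 < n)
    (hk : 0 < k) : (n.choose k : R) - ((n - 1).choose k : R) = ((n - 1).choose (k - 1) : R) := by
  rw [Nat.choose_eq_choose_pred_add hn hk, Nat.cast_add, add_sub_cancel_right]

noncomputable def bananaCSMPoly (R : Type*) [CommRing R] (n : ℕ) : R[X] :=
  (1 + X) ^ n - (1 - X) ^ (n - 1) - (n : R[X]) * X - X ^ n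

section

variable {R : Type*} [CommRing R]

theorem coeff_bananaCSMPoly (n k : ℕ) :
    (bananaCSMPoly R n).coeff k = n.choose k - (-1) ^ k * (n - 1).choose k
      - (if k = 1 then (n : R) else 0) - (if k = n then 1 else 0) := by
  simp only [bananaCSMPoly, coeff_sub, coeff_one_add_X_pow, coeff_one_sub_X_pow, coeff_natCast_mul,
    coeff_X, coeff_X_pow, eq_comm (a := 1), mul_ite, mul_one, mul_zero]

theorem coeff_bananaCSMPoly_of_ne {n k : ℕ} (hk1 : k ≠ 1) (hkn : k ≠ n) :
    (bananaCSMPoly R n).coeff k = n.choose k - (-1) ^ k * (n - 1).choose k := by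
  simp [coeff_bananaCSMPoly, hk1, hkn]

theorem coeff_one_bananaCSMPoly {n : ℕ} (hn : 2 ≤ n) : (bananaCSMPoly R n).coeff 1 = n - 1 := by
  obtain ⟨m, rfl⟩ : ∃ m, n = m + 2 := ⟨n - 2, by omega⟩
  simp only [coeff_bananaCSMPoly, if_pos, show 1 ≠ m + 2 by omega, if_false, Nat.choose_one_right]
  push_cast
  ring

theorem coeff_bananaCSMPoly_of_even {n k : ℕ} (hk : Even k) (hk1 : k ≠ 1) (hkn : k ≠ n) :
    (bananaCSMPoly R n).coeff k = n.choose k - (n - 1).choose k := by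
  rw [coeff_bananaCSMPoly_of_ne hk1 hkn, hk.neg_one_pow, one_mul]

theorem coeff_bananaCSMPoly_of_odd {n k : ℕ} (hk : Odd k) (hk1 : k ≠ 1) (hkn : k ≠ n) :
    (bananaCSMPoly R n).coeff k = n.choose k + (n - 1).choose k := by
  rw [coeff_bananaCSMPoly_of_ne hk1 hkn, hk.neg_one_pow, neg_one_mul, sub_neg_eq_add]

theorem coeff_bananaCSMPoly_pos {n k : ℕ} (hk1 : 1 ≤ k) (hkn : k ≤ n - 1) :
    0 < (bananaCSMPoly ℤ n).coeff k := by
  obtain rfl | hk2 := hk1.eq_or_lt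
  · rw [coeff_one_bananaCSMPoly (by omega)]
    omega
  rcases Nat.even_or_odd k with he | ho
  · rw [coeff_bananaCSMPoly_of_even he (by omega) (by omega),
      natCast_choose_sub_choose_pred (by omega) (by omega)]
    exact_mod_cast Nat.choose_pos (by omega)
  · rw [coeff_bananaCSMPoly_of_odd ho (by omega) (by omega)]
    have : 0 < n.choose k := Nat.choose_pos (by omega)
    positivity

end

/-- The coefficients of the CSM class polynomial (1+H)^n - (1-H)^{n-1} - nH - H^n of the
banana hypersurface: for 2 ≤ k ≤ n-1 the coefficient of H^k is C(n,k) - C(n-1,k)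
(= C(n-1,k-1)) if k is even and C(n,k) + C(n-1,k) if k is odd; the coefficient of H is
n-1; in particular all coefficients of H^k for 1 ≤ k ≤ n-1 are positive. -/
theorem banana_csm_coefficients (n : ℕ) (hn : 2 ≤ n) :
    (∀ k, 2 ≤ k → k ≤ n-1 →
      ((1 + X)^n - (1 - X)^(n-1) - (n : Polynomial ℤ) * X - X^n).coeff k
        = if Even k then (n.choose k : ℤ) - ((n-1).choose k : ℤ)
          else (n.choose k : ℤ) + ((n-1).choose k : ℤ)) ∧
    (∀ k, 2 ≤ k → k ≤ n-1 → Even k →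
      (n.choose k : ℤ) - ((n-1).choose k : ℤ) = ((n-1).choose (k-1) : ℤ)) ∧
    ((1 + X)^n - (1 - X)^(n-1) - (n : Polynomial ℤ) * X - X^n).coeff 1 = (n : ℤ) - 1 ∧
    (∀ k, 1 ≤ k → k ≤ n-1 →
      0 < ((1 + X)^n - (1 - X)^(n-1) - (n : Polynomial ℤ) * X - X^n).coeff k) := by
  refine ⟨fun k hk2 hkn => ?_,
    fun k hk2 hkn _ => natCast_choose_sub_choose_pred (by omega) (by omega),
    coeff_one_bananaCSMPoly hn, fun k hk1 hkn => coeff_bananaCSMPoly_pos hk1 hkn⟩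
  split_ifs with he
  · exact coeff_bananaCSMPoly_of_even he (by omega) (by omega)
  · exact coeff_bananaCSMPoly_of_odd (Nat.not_even_iff_odd.mp he) (by omega) (by omega)
end
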